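/- arXiv:1401.0887 — 2 statements merged into one kernel-verified Lean document; each statement's English description precedes it below -/
import Mathlib

section
/- Let c, ε₁, ε₂ be real numbers with 0 ≤ c − ε₁, and let p_1, …, p_S (S ≥ 1) be real polynomials such that for every eigenvalue index ℓ : Fin N: (i) 0 ≤ p_s.eval (λ_ℓ) ≤ c for every s, and (ii) c − ε₁ ≤ Σ_{s=1}^S p_s.eval (λ_ℓ) ≤ c + ε₂. Then the atoms {d_{s,n}} form a frame: for every y ∈ ℝ^N, ((c − ε₁)² / S) · ‖y‖² ≤ Σ_{n=1}^N Σ_{s=1}^S ⟨y, d_{s,n}⟩² ≤ (c + ε₂)² · ‖y‖². -/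
/-!
Since `L` is symmetric, so is every `D_s = p_s(L)`, and the frame operator `∑ₛ D_s D_sᵀ` is
`q(L)` for `q = ∑ₛ p_s²`; the frame sum `∑ₙ ∑ₛ ⟨y, d_{s,n}⟩²` is its quadratic form at `y`. The
frame bounds are therefore bounds on the spectrum `q(λ_ℓ) = ∑ₛ p_s(λ_ℓ)²`, and for nonnegative
values `(∑ₛ p_s(λ_ℓ))² / S ≤ ∑ₛ p_s(λ_ℓ)² ≤ (∑ₛ p_s(λ_ℓ))²` (Cauchy–Schwarz, resp. expanding
the square).
-/

open Finset Matrix Polynomial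
open scoped MatrixOrder

namespace Finset

variable {ι : Type*} {s : Finset ι} {f : ι → ℝ}

lemma sq_div_card_le_sum_sq_of_le_sum (hf : ∀ i ∈ s, 0 ≤ f i) {a : ℝ} (ha : 0 ≤ a)
    (h : a ≤ ∑ i ∈ s, f i) : a ^ 2 / #s ≤ ∑ i ∈ s, f i ^ 2 :=
  calc a ^ 2 / #s ≤ (∑ i ∈ s, f i) ^ 2 / #s := by gcongr
    _ ≤ ∑ i ∈ s, f i ^ 2 := by simpa using pow_sum_div_card_le_sum_pow hf 1

lemma sum_sq_le_sq_of_sum_le (hf : ∀ i ∈ s, 0 ≤ f i) {b : ℝ} (h : ∑ i ∈ s, f i ≤ b) :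
    ∑ i ∈ s, f i ^ 2 ≤ b ^ 2 :=
  (sum_sq_le_sq_sum_of_nonneg hf).trans (pow_le_pow_left₀ (sum_nonneg hf) h 2)

end Finset

namespace Matrix

variable {n : Type*} [Fintype n]

lemma sum_vecMul_sq (M : Matrix n n ℝ) (y : n → ℝ) :
    ∑ j, (y ᵥ* M) j ^ 2 = y ⬝ᵥ ((M * Mᵀ) *ᵥ y) := by
  rw [← mulVec_mulVec, dotProduct_mulVec, mulVec_transpose]
  simp only [dotProduct, sq]

variable [DecidableEq n]

lemma mul_dotProduct_self_le_of_algebraMap_le {G : Matrix n n ℝ} {r : ℝ}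
    (h : algebraMap ℝ (Matrix n n ℝ) r ≤ G) (y : n → ℝ) :
    r * (y ⬝ᵥ y) ≤ y ⬝ᵥ (G *ᵥ y) := by
  have := (le_iff.mp h).dotProduct_mulVec_nonneg y
  rw [star_trivial, sub_mulVec, dotProduct_sub, Algebra.algebraMap_eq_smul_one, smul_mulVec,
    one_mulVec, dotProduct_smul, smul_eq_mul] at this
  linarith

lemma dotProduct_mulVec_le_of_le_algebraMap {G : Matrix n n ℝ} {r : ℝ}
    (h : G ≤ algebraMap ℝ (Matrix n n ℝ) r) (y : n → ℝ) :
    y ⬝ᵥ (G *ᵥ y) ≤ r * (y ⬝ᵥ y) := by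
  have := (le_iff.mp h).dotProduct_mulVec_nonneg y
  rw [star_trivial, sub_mulVec, dotProduct_sub, Algebra.algebraMap_eq_smul_one, smul_mulVec,
    one_mulVec, dotProduct_smul, smul_eq_mul] at this
  linarith

namespace IsHermitian

variable {A : Matrix n n ℝ}

protected lemma aeval (hA : A.IsHermitian) (q : ℝ[X]) : (aeval A q).IsHermitian := by
  rw [← cfc_polynomial q A hA.isSelfAdjoint]
  exact IsSelfAdjoint.cfc.isHermitian

lemma algebraMap_le_aeval (hA : A.IsHermitian) {q : ℝ[X]} {r : ℝ}
    (h : ∀ i, r ≤ q.eval (hA.eigenvalues i)) : algebraMap ℝ (Matrix n n ℝ) r ≤ aeval A q := by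
  rw [← cfc_polynomial q A hA.isSelfAdjoint]
  refine algebraMap_le_cfc _ _ _ fun x hx => ?_
  obtain ⟨i, rfl⟩ := hA.spectrum_real_eq_range_eigenvalues ▸ hx
  exact h i

lemma aeval_le_algebraMap (hA : A.IsHermitian) {q : ℝ[X]} {r : ℝ}
    (h : ∀ i, q.eval (hA.eigenvalues i) ≤ r) : aeval A q ≤ algebraMap ℝ (Matrix n n ℝ) r := by
  rw [← cfc_polynomial q A hA.isSelfAdjoint]
  refine cfc_le_algebraMap _ _ _ fun x hx => ?_
  obtain ⟨i, rfl⟩ := hA.spectrum_real_eq_range_eigenvalues ▸ hx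
  exact h i

lemma sum_sum_vecMul_aeval_sq (hA : A.IsHermitian) {ι : Type*} [Fintype ι] (p : ι → ℝ[X])
    (y : n → ℝ) :
    ∑ j, ∑ s, (y ᵥ* aeval A (p s)) j ^ 2 = y ⬝ᵥ (aeval A (∑ s, p s ^ 2) *ᵥ y) := by
  have hsq (s : ι) : aeval A (p s) * (aeval A (p s))ᵀ = aeval A (p s ^ 2) := by
    rw [← conjTranspose_eq_transpose_of_trivial, (hA.aeval (p s)).eq, map_pow, sq]
  simp_rw [sum_comm (γ := n), sum_vecMul_sq, hsq, ← dotProduct_sum, ← sum_mulVec, map_sum]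

end IsHermitian
end Matrix

theorem polynomial_dictionary_frame_general
    (N S : ℕ)
    (L : Matrix (Fin N) (Fin N) ℝ) (hL : L.IsHermitian)
    (c ε₁ ε₂ : ℝ) (hc : 0 ≤ c - ε₁)
    (p : Fin S → Polynomial ℝ)
    (h1 : ∀ (ℓ : Fin N) (s : Fin S),
      0 ≤ (p s).eval (hL.eigenvalues ℓ) ∧ (p s).eval (hL.eigenvalues ℓ) ≤ c)
    (h2 : ∀ ℓ : Fin N,
      c - ε₁ ≤ ∑ s : Fin S, (p s).eval (hL.eigenvalues ℓ) ∧
      ∑ s : Fin S, (p s).eval (hL.eigenvalues ℓ) ≤ c + ε₂)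
    (y : Fin N → ℝ) :
    (c - ε₁) ^ 2 / (S : ℝ) * ∑ i : Fin N, (y i) ^ 2 ≤
      ∑ n : Fin N, ∑ s : Fin S,
        (∑ i : Fin N, y i * (Polynomial.aeval L (p s)) i n) ^ 2 ∧
    ∑ n : Fin N, ∑ s : Fin S,
        (∑ i : Fin N, y i * (Polynomial.aeval L (p s)) i n) ^ 2 ≤
      (c + ε₂) ^ 2 * ∑ i : Fin N, (y i) ^ 2 := by
  have hframe : ∑ n : Fin N, ∑ s : Fin S, (∑ i : Fin N, y i * (aeval L (p s)) i n) ^ 2 =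
      y ⬝ᵥ (aeval L (∑ s, p s ^ 2) *ᵥ y) :=
    hL.sum_sum_vecMul_aeval_sq p y
  have heval (ℓ : Fin N) : (∑ s, p s ^ 2).eval (hL.eigenvalues ℓ) =
      ∑ s, (p s).eval (hL.eigenvalues ℓ) ^ 2 := by
    simp only [eval_finsetSum, eval_pow]
  have hlower : algebraMap ℝ _ ((c - ε₁) ^ 2 / S) ≤ aeval L (∑ s, p s ^ 2) :=
    hL.algebraMap_le_aeval fun ℓ => by
      simpa only [heval, card_univ, Fintype.card_fin] using
        sq_div_card_le_sum_sq_of_le_sum (fun s _ => (h1 ℓ s).1) hc (h2 ℓ).1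
  have hupper : aeval L (∑ s, p s ^ 2) ≤ algebraMap ℝ _ ((c + ε₂) ^ 2) :=
    hL.aeval_le_algebraMap fun ℓ => by
      simpa only [heval] using sum_sq_le_sq_of_sum_le (fun s _ => (h1 ℓ s).1) (h2 ℓ).2
  have hnorm : ∑ i, y i ^ 2 = y ⬝ᵥ y := by simp only [dotProduct, sq]
  rw [hframe, hnorm]
  exact ⟨mul_dotProduct_self_le_of_algebraMap_le hlower y,
    dotProduct_mulVec_le_of_le_algebraMap hupper y⟩

/-- Frame bounds for the polynomial graph dictionary: if the generating kernels
`p s` satisfy `0 ≤ p_s(λ_ℓ) ≤ c` and `c - ε₁ ≤ Σ_s p_s(λ_ℓ) ≤ c + ε₂` on the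
spectrum of `L`, then the atoms `d_{s,n}` (columns of `(p s)(L)`) form a frame
with bounds `(c - ε₁)² / S` and `(c + ε₂)²`. -/
theorem polynomial_dictionary_frame
    (N S : ℕ) (hN : 0 < N) (hS : 1 ≤ S)
    (L : Matrix (Fin N) (Fin N) ℝ) (hL : L.IsHermitian)
    (c ε₁ ε₂ : ℝ) (hc : 0 ≤ c - ε₁)
    (p : Fin S → Polynomial ℝ)
    (h1 : ∀ (ℓ : Fin N) (s : Fin S),
      0 ≤ (p s).eval (hL.eigenvalues ℓ) ∧ (p s).eval (hL.eigenvalues ℓ) ≤ c)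
    (h2 : ∀ ℓ : Fin N,
      c - ε₁ ≤ ∑ s : Fin S, (p s).eval (hL.eigenvalues ℓ) ∧
      ∑ s : Fin S, (p s).eval (hL.eigenvalues ℓ) ≤ c + ε₂)
    (y : Fin N → ℝ) :
    (c - ε₁) ^ 2 / (S : ℝ) * ∑ i : Fin N, (y i) ^ 2 ≤
      ∑ n : Fin N, ∑ s : Fin S,
        (∑ i : Fin N, y i * (Polynomial.aeval L (p s)) i n) ^ 2 ∧
    ∑ n : Fin N, ∑ s : Fin S,
        (∑ i : Fin N, y i * (Polynomial.aeval L (p s)) i n) ^ 2 ≤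
      (c + ε₂) ^ 2 * ∑ i : Fin N, (y i) ^ 2 :=
  polynomial_dictionary_frame_general N S L hL c ε₁ ε₂ hc p h1 h2 y
end

section
/- For every y ∈ ℝ^N, Σ_{n=1}^N Σ_{s=1}^S ⟨y, d_{s,n}⟩² = Σ_{ℓ : Fin N} ⟨y, χ_ℓ⟩² · Σ_{s=1}^S (p_s.eval (λ_ℓ))², where χ_ℓ is the orthonormal eigenbasis of L and λ_ℓ its eigenvalues. -/
/-! The atoms `d_{s,n}` are the columns of `p_s(L)`, so `Σ_n ⟨y, d_{s,n}⟩² = ‖yᵀ p_s(L)‖²`.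
Parseval in the eigenbasis computes this norm from the coordinates
`⟨yᵀ p_s(L), χ_ℓ⟩ = ⟨y, p_s(L) χ_ℓ⟩ = p_s(λ_ℓ) ⟨y, χ_ℓ⟩`, and summing over `s` gives the identity. -/

open Matrix Polynomial

theorem Matrix.aeval_mulVec_of_mulVec_eq_smul {R n : Type*} [CommRing R] [Fintype n]
    [DecidableEq n] {A : Matrix n n R} {v : n → R} {μ : R} (h : A *ᵥ v = μ • v) (p : R[X]) :
    aeval A p *ᵥ v = p.eval μ • v := by
  have pow_mulVec (k : ℕ) : (A ^ k) *ᵥ v = μ ^ k • v := by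
    induction k with
    | zero => simp
    | succ k ih => rw [pow_succ, ← mulVec_mulVec, h, mulVec_smul, ih, smul_smul, pow_succ']
  induction p using Polynomial.induction_on' with
  | add p q hp hq => rw [aeval_add, add_mulVec, hp, hq, eval_add, add_smul]
  | monomial k a =>
    rw [aeval_monomial, ← Algebra.smul_def, smul_mulVec, pow_mulVec, smul_smul,
      eval_monomial]

theorem OrthonormalBasis.sum_sq_dotProduct {ι : Type*} [Fintype ι]
    (b : OrthonormalBasis ι ℝ (EuclideanSpace ℝ ι)) (w : ι → ℝ) :
    ∑ j, (w ⬝ᵥ ⇑(b j)) ^ 2 = ∑ i, w i ^ 2 := by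
  calc ∑ j, (w ⬝ᵥ ⇑(b j)) ^ 2 = ∑ j, inner ℝ (WithLp.toLp 2 w) (b j) ^ 2 := by
        simp only [EuclideanSpace.inner_eq_star_dotProduct, star_trivial, dotProduct_comm]
    _ = ‖WithLp.toLp 2 w‖ ^ 2 := b.sum_sq_inner_left _
    _ = ∑ i, w i ^ 2 := by simp [EuclideanSpace.norm_sq_eq]

theorem polynomial_dictionary_parseval_general
    (N S : ℕ)
    (L : Matrix (Fin N) (Fin N) ℝ) (hL : L.IsHermitian)
    (p : Fin S → Polynomial ℝ)
    (y : Fin N → ℝ) :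
    ∑ n : Fin N, ∑ s : Fin S,
        (∑ i : Fin N, y i * (Polynomial.aeval L (p s)) i n) ^ 2 =
      ∑ ℓ : Fin N,
        (∑ i : Fin N, y i * hL.eigenvectorBasis ℓ i) ^ 2 *
          ∑ s : Fin S, ((p s).eval (hL.eigenvalues ℓ)) ^ 2 := by
  set χ := hL.eigenvectorBasis
  have atom_coeff (s : Fin S) (ℓ : Fin N) :
      y ᵥ* aeval L (p s) ⬝ᵥ ⇑(χ ℓ) = (p s).eval (hL.eigenvalues ℓ) * (y ⬝ᵥ ⇑(χ ℓ)) := by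
    rw [← dotProduct_mulVec, aeval_mulVec_of_mulVec_eq_smul (hL.mulVec_eigenvectorBasis ℓ),
      dotProduct_smul, smul_eq_mul]
  calc ∑ n, ∑ s, (∑ i, y i * aeval L (p s) i n) ^ 2
      = ∑ s, ∑ n, (y ᵥ* aeval L (p s)) n ^ 2 := Finset.sum_comm
    _ = ∑ s, ∑ ℓ, ((p s).eval (hL.eigenvalues ℓ) * (y ⬝ᵥ ⇑(χ ℓ))) ^ 2 := by
      refine Finset.sum_congr rfl fun s _ => ?_
      rw [← χ.sum_sq_dotProduct]
      simp only [atom_coeff]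
    _ = ∑ ℓ, (y ⬝ᵥ ⇑(χ ℓ)) ^ 2 * ∑ s, ((p s).eval (hL.eigenvalues ℓ)) ^ 2 := by
      rw [Finset.sum_comm]
      simp only [mul_pow, Finset.sum_mul, mul_comm]

/-- Generalized Parseval identity for the polynomial graph dictionary: the sum of
squared inner products of a signal `y` with all atoms `d_{s,n}` equals
`Σ_ℓ ⟨y, χ_ℓ⟩² Σ_s (p_s(λ_ℓ))²`. -/
theorem polynomial_dictionary_parseval
    (N S : ℕ) (hN : 0 < N) (hS : 1 ≤ S)
    (L : Matrix (Fin N) (Fin N) ℝ) (hL : L.IsHermitian)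
    (p : Fin S → Polynomial ℝ)
    (y : Fin N → ℝ) :
    ∑ n : Fin N, ∑ s : Fin S,
        (∑ i : Fin N, y i * (Polynomial.aeval L (p s)) i n) ^ 2 =
      ∑ ℓ : Fin N,
        (∑ i : Fin N, y i * hL.eigenvectorBasis ℓ i) ^ 2 *
          ∑ s : Fin S, ((p s).eval (hL.eigenvalues ℓ)) ^ 2 :=
  polynomial_dictionary_parseval_general N S L hL p y
end
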